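/- arXiv:2303.17429 — 2 statements merged into one kernel-verified Lean document; each statement's English description precedes it below -/
import Mathlib

section
/- Let Γ be a countably infinite group with a finite symmetric generating set S and Cayley graph 𝒢. If for every α < 1 there exists a Γ-invariant bond percolation P on 𝒢 with E[deg_ω(o)] > α·deg(o) and with two-point function τ(o,·) vanishing at infinity, then there exists a sequence (φ_n) of normalized positive definite functions φ_n : Γ → [0,1] such that each φ_n vanishes at infinity and φ_n converges pointwise to 1 on Γ (i.e., Γ has the Haagerup property). -/
/-! Take `φₙ = τₙ(o, ·)` for percolations `Pₙ` with `E[deg_ω(o)] > (1 - δ)·deg(o)`,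
`δ = 1/(n+1)`. Positive definiteness: `τ(g, h) = E[1{g ↔ h}]`, and for fixed `ω` the matrix
`1{gᵢ ↔ gⱼ}` is the Gram matrix of the indicator vectors of the clusters. Vanishing at infinity
is the hypothesis on `τ`, since balls of the word metric are finite. Convergence: the degree
bound forces every edge at `o` to be open with probability `> 1 - δ|S|`, and the inequality
`τ(u,v) + τ(v,w) ≤ 1 + τ(u,w)` (inclusion–exclusion, as `{u ↔ v} ∩ {v ↔ w} ⊆ {u ↔ w}`)
together with invariance yields `τ(o, g) ≥ 1 - |g|·δ|S|`. -/

open MeasureTheory Filter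
open scoped ComplexOrder symmDiff

namespace InvPerc

variable {Γ : Type*} [Group Γ]

/-- Percolation configurations: indicator functions on unordered pairs of vertices. -/
abbrev Config (Γ : Type*) := Sym2 Γ → Bool

/-- The edge set of the (right) Cayley graph of `Γ` with respect to `S`. -/
def IsCayleyEdge (S : Finset Γ) (e : Sym2 Γ) : Prop :=
  ∃ g : Γ, ∃ t ∈ S, e = s(g, g * t)

/-- The action of `Γ` on configurations induced by left multiplication:
`e ∈ shift γ ω ↔ γ⁻¹ • e ∈ ω`. -/
def shift (γ : Γ) (ω : Config Γ) : Config Γ :=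
  fun e => ω (Sym2.map (fun x => γ⁻¹ * x) e)

/-- `ConnBy ω u v n` : `u` and `v` are joined by a path of at most `n` open edges of `ω`. -/
def ConnBy (ω : Config Γ) (u v : Γ) (n : ℕ) : Prop :=
  ∃ l : List Γ, l.length ≤ n ∧ List.Chain (fun a b => ω s(a, b) = true) u l ∧
    (u :: l).getLast (List.cons_ne_nil u l) = v

/-- `u` and `v` lie in the same cluster of the configuration `ω` (`u ↔ v` in `ω`). -/
def Conn (ω : Config Γ) (u v : Γ) : Prop := ∃ n : ℕ, ConnBy ω u v n

/-- The two-point function `τ(u,v) = P[u ↔ v]`. -/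
noncomputable def tpf (P : Measure (Config Γ)) (u v : Γ) : ℝ :=
  (P {ω | Conn ω u v}).toReal

/-- A `Γ`-invariant bond percolation on the Cayley graph of `(Γ, S)`: a probability
measure on configurations, supported on subsets of the Cayley edge set, invariant under
the action induced by left multiplication. -/
structure IsInvBondPerc (S : Finset Γ) (P : Measure (Config Γ)) : Prop where
  prob : IsProbabilityMeasure P
  supported : P {ω | ∀ e : Sym2 Γ, ω e = true → IsCayleyEdge S e} = 1
  invariant : ∀ γ : Γ, P.map (shift γ) = P

/-- The expected degree of the origin, `E[deg_ω(o)] = ∑_{t ∈ S} P[{o, t} ∈ ω]`. -/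
noncomputable def expDeg (S : Finset Γ) (P : Measure (Config Γ)) : ℝ :=
  ∑ t ∈ S, (P {ω : Config Γ | ω s(1, t) = true}).toReal

/-- The word length of `g` with respect to the generating set `S`. -/
noncomputable def wlen (S : Finset Γ) (g : Γ) : ℕ :=
  sInf {n : ℕ | ∃ l : List Γ, (∀ x ∈ l, x ∈ S) ∧ l.prod = g ∧ l.length = n}

/-- The word metric `d(g,h) = |g⁻¹h|`. -/
noncomputable def wdist (S : Finset Γ) (g h : Γ) : ℕ := wlen S (g⁻¹ * h)

/-- The two-point function of `P` vanishes at infinity: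
`sup {τ(g,h) : d(g,h) > r} → 0` as `r → ∞`. -/
def TpfVanishes (S : Finset Γ) (P : Measure (Config Γ)) : Prop :=
  ∀ ε : ℝ, 0 < ε → ∃ r : ℕ, ∀ g h : Γ, r < wdist S g h → tpf P g h < ε

/-- `S` is a finite symmetric generating set not containing the identity. -/
def IsSymmGen (S : Finset Γ) : Prop :=
  (1 : Γ) ∉ S ∧ (∀ t ∈ S, t⁻¹ ∈ S) ∧
    ∀ g : Γ, ∃ l : List Γ, (∀ x ∈ l, x ∈ S) ∧ l.prod = g

/-- A positive definite function on `Γ`. -/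
def IsPosDef (φ : Γ → ℂ) : Prop :=
  ∀ (n : ℕ) (g : Fin n → Γ) (a : Fin n → ℂ),
    0 ≤ ∑ i : Fin n, ∑ j : Fin n, (starRingEnd ℂ) (a i) * a j * φ ((g i)⁻¹ * g j)

/-- A conditionally negative definite function on `Γ`. -/
def IsCondNegDef (ψ : Γ → ℝ) : Prop :=
  ψ 1 = 0 ∧ (∀ g : Γ, ψ g⁻¹ = ψ g) ∧
    ∀ (n : ℕ) (g : Fin n → Γ) (a : Fin n → ℝ), (∑ i : Fin n, a i) = 0 →
      ∑ i : Fin n, ∑ j : Fin n, a i * a j * ψ ((g i)⁻¹ * g j) ≤ 0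

end InvPerc

namespace InvPerc

section Clusters

variable {Γ : Type*} (ω : Config Γ)

def openGraph : SimpleGraph Γ := SimpleGraph.fromEdgeSet {e | ω e = true}

theorem conn_eq_reachable : Conn ω = (openGraph ω).Reachable := by
  ext u v
  rw [openGraph, SimpleGraph.reachable_fromEdgeSet_eq_reflTransGen_toRel]
  constructor
  · rintro ⟨-, l, -, hchain, hlast⟩
    exact List.relationReflTransGen_of_exists_isChain_cons l hchain hlast
  · intro h
    obtain ⟨l, hchain, hlast⟩ := List.exists_isChain_cons_of_relationReflTransGen h
    exact ⟨l.length, l, le_rfl, hchain, hlast⟩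

theorem conn_equivalence : Equivalence (Conn ω) :=
  conn_eq_reachable ω ▸ (openGraph ω).reachable_is_equivalence

theorem measurableSet_isChain (u : Γ) (l : List Γ) :
    MeasurableSet {ω : Config Γ | List.IsChain (fun a b => ω s(a, b) = true) (u :: l)} := by
  induction l generalizing u with
  | nil => simp
  | cons b l ih =>
    simp only [List.isChain_cons_cons, Set.ofPred_and]
    exact (measurableSet_eq_fun (measurable_pi_apply _) measurable_const).inter (ih b)

theorem measurableSet_conn [Countable Γ] (u v : Γ) :
    MeasurableSet {ω : Config Γ | Conn ω u v} := by
  simp only [Conn, ConnBy, Set.ofPred_exists, Set.ofPred_and]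
  exact .iUnion fun _ => .iUnion fun l =>
    (MeasurableSet.const _).inter ((measurableSet_isChain u l).inter (.const _))

variable [Group Γ]

def openGraphShiftIso (γ : Γ) : openGraph ω ≃g openGraph (shift γ ω) where
  toEquiv := Equiv.mulLeft γ
  map_rel_iff' := by simp [openGraph, shift]

theorem conn_shift_mul_iff (γ : Γ) {u v : Γ} :
    Conn (shift γ ω) (γ * u) (γ * v) ↔ Conn ω u v := by
  rw [conn_eq_reachable, conn_eq_reachable]
  exact (openGraphShiftIso ω γ).reachable_iff

end Clusters

section TwoPointFunction

variable {Γ : Type*} (P : Measure (Config Γ))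

theorem tpf_nonneg (u v : Γ) : 0 ≤ tpf P u v := ENNReal.toReal_nonneg

theorem tpf_le_one [IsProbabilityMeasure P] (u v : Γ) : tpf P u v ≤ 1 := measureReal_le_one

theorem tpf_self [IsProbabilityMeasure P] (u : Γ) : tpf P u u = 1 := by
  simp [tpf, (conn_equivalence _).refl]

theorem measureReal_edge_le_tpf [IsFiniteMeasure P] (u v : Γ) :
    P.real {ω | ω s(u, v) = true} ≤ tpf P u v :=
  measureReal_mono fun ω h => ⟨1, [v], le_rfl, List.isChain_pair.2 h, rfl⟩

variable [Countable Γ]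

theorem ofReal_tpf_eq_integral (u v : Γ) :
    (tpf P u v : ℂ) = ∫ ω, {ω | Conn ω u v}.indicator (fun _ => 1) ω ∂P := by
  rw [integral_indicator_const _ (measurableSet_conn u v), Complex.real_smul, mul_one]
  rfl

theorem tpf_add_tpf_le [IsProbabilityMeasure P] (u v w : Γ) :
    tpf P u v + tpf P v w ≤ 1 + tpf P u w := by
  have hsub : {ω | Conn ω u v} ∩ {ω | Conn ω v w} ⊆ {ω | Conn ω u w} :=
    fun ω h => (conn_equivalence ω).trans h.1 h.2
  calc tpf P u v + tpf P v w
      = P.real ({ω | Conn ω u v} ∪ {ω | Conn ω v w}) +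
          P.real ({ω | Conn ω u v} ∩ {ω | Conn ω v w}) :=
        (measureReal_union_add_inter (measurableSet_conn v w)).symm
    _ ≤ 1 + tpf P u w := add_le_add measureReal_le_one (measureReal_mono hsub)

theorem tpf_mul_left [Group Γ] (hinv : ∀ γ : Γ, P.map (shift γ) = P) (γ u v : Γ) :
    tpf P (γ * u) (γ * v) = tpf P u v := by
  have hshift : Measurable (shift (Γ := Γ) γ) :=
    measurable_pi_lambda _ fun _ => measurable_pi_apply _
  conv_lhs => rw [tpf, ← hinv γ, Measure.map_apply hshift (measurableSet_conn _ _)]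
  simp only [Set.preimage_ofPred_eq, conn_shift_mul_iff, tpf]

end TwoPointFunction

open Finset in
theorem sum_star_mul_ite_eq_nonneg {ι R β : Type*} [Fintype ι] [DecidableEq β]
    [Semiring R] [PartialOrder R] [StarRing R] [StarOrderedRing R] (f : ι → β) (a : ι → R) :
    0 ≤ ∑ i, ∑ j, star (a i) * a j * (if f i = f j then 1 else 0) := by
  have hfibre : ∀ i, ∑ j, star (a i) * a j * (if f i = f j then 1 else 0) =
      ∑ j with f j = f i, star (a i) * a j := by
    intro i
    simp only [mul_ite, mul_one, mul_zero, sum_filter, eq_comm]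
  calc (0 : R) ≤ ∑ b ∈ univ.image f, star (∑ i with f i = b, a i) * ∑ j with f j = b, a j :=
        sum_nonneg fun b _ => star_mul_self_nonneg _
    _ = ∑ b ∈ univ.image f, ∑ i with f i = b, ∑ j with f j = f i, star (a i) * a j := by
        refine sum_congr rfl fun b _ => ?_
        rw [star_sum, sum_mul_sum]
        exact sum_congr rfl fun i hi => by rw [(mem_filter.1 hi).2]
    _ = _ := by
        simp only [← hfibre]
        exact sum_fiberwise_of_maps_to (fun i _ => mem_image_of_mem f (mem_univ i)) _

theorem isPosDef_tpf {Γ : Type*} [Group Γ] [Countable Γ] (P : Measure (Config Γ))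
    [IsProbabilityMeasure P] (hinv : ∀ γ : Γ, P.map (shift γ) = P) :
    IsPosDef fun g => (tpf P 1 g : ℂ) := by
  classical
  intro n g a
  set A : Fin n → Fin n → Set (Config Γ) := fun i j => {ω | Conn ω (g i) (g j)}
  have hint : ∀ i j, Integrable ((A i j).indicator fun _ => (1 : ℂ)) P :=
    fun i j => (integrable_const 1).indicator (measurableSet_conn _ _)
  have hentry : ∀ i j,
      (tpf P 1 ((g i)⁻¹ * g j) : ℂ) = ∫ ω, (A i j).indicator (fun _ => 1) ω ∂P := by
    intro i j
    rw [← ofReal_tpf_eq_integral, ← tpf_mul_left P hinv (g i), mul_one, mul_inv_cancel_left]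
  calc (0 : ℂ)
      ≤ ∫ ω, ∑ i, ∑ j, starRingEnd ℂ (a i) * a j * (A i j).indicator (fun _ => 1) ω ∂P := by
        refine integral_nonneg fun ω => ?_
        have hclusters :=
          sum_star_mul_ite_eq_nonneg (fun i => (openGraph ω).connectedComponentMk (g i)) a
        simpa [A, Set.indicator_apply, SimpleGraph.ConnectedComponent.eq, conn_eq_reachable]
          using hclusters
    _ = _ := by
        rw [integral_finsetSum _ fun i _ =>
          integrable_finsetSum _ fun j _ => (hint i j).const_mul _]
        refine Finset.sum_congr rfl fun i _ => ?_
        rw [integral_finsetSum _ fun j _ => (hint i j).const_mul _]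
        simp only [integral_const_mul, hentry]

section WordLength

variable {Γ : Type*} [Group Γ] {S : Finset Γ}
  (hgen : ∀ g : Γ, ∃ l : List Γ, (∀ x ∈ l, x ∈ S) ∧ l.prod = g)
include hgen

theorem exists_word_length_eq_wlen (g : Γ) :
    ∃ l : List Γ, (∀ x ∈ l, x ∈ S) ∧ l.prod = g ∧ l.length = wlen S g := by
  obtain ⟨l, hlS, hlg⟩ := hgen g
  exact Nat.sInf_mem (s := {n | ∃ l : List Γ, (∀ x ∈ l, x ∈ S) ∧ l.prod = g ∧ l.length = n})
    ⟨l.length, l, hlS, hlg, rfl⟩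

theorem finite_setOf_wlen_le (r : ℕ) : {g : Γ | wlen S g ≤ r}.Finite := by
  refine ((List.finite_length_le S r).image fun l => (l.map (↑)).prod).subset fun g hg => ?_
  obtain ⟨l, hlS, hlg, hlen⟩ := exists_word_length_eq_wlen hgen g
  refine ⟨l.pmap Subtype.mk hlS, by simpa [hlen] using hg, ?_⟩
  simpa [List.map_pmap] using hlg

theorem finite_setOf_le_abs_tpf {P : Measure (Config Γ)} (hvan : TpfVanishes S P) {c : ℝ}
    (hc : 0 < c) : {g : Γ | c ≤ |tpf P 1 g|}.Finite := by
  obtain ⟨r, hr⟩ := hvan c hc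
  refine (finite_setOf_wlen_le hgen r).subset fun g hg => ?_
  by_contra hfar
  have : r < wdist S 1 g := by simpa [wdist] using hfar
  exact (hr 1 g this).not_ge (by simpa [abs_of_nonneg (tpf_nonneg P 1 g)] using hg)

end WordLength

section LowerBound

variable {Γ : Type*} [Group Γ] {S : Finset Γ} (P : Measure (Config Γ)) [IsProbabilityMeasure P]

theorem one_sub_mul_card_lt_measureReal_edge {δ : ℝ} (hdeg : (1 - δ) * S.card < expDeg S P)
    {t : Γ} (ht : t ∈ S) : 1 - δ * S.card < P.real {ω | ω s(1, t) = true} := by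
  have hdefect : 1 - P.real {ω | ω s(1, t) = true} ≤
      ∑ t' ∈ S, (1 - P.real {ω | ω s(1, t') = true}) :=
    Finset.single_le_sum (f := fun t' => 1 - P.real {ω | ω s(1, t') = true})
      (fun _ _ => sub_nonneg.2 measureReal_le_one) ht
  rw [Finset.sum_sub_distrib] at hdefect
  change _ < ∑ t' ∈ S, P.real {ω | ω s(1, t') = true} at hdeg
  simp only [Finset.sum_const, nsmul_eq_mul, mul_one] at hdefect
  linarith

variable [Countable Γ] (hinv : ∀ γ : Γ, P.map (shift γ) = P)
include hinv

theorem one_sub_length_mul_le_tpf_prod {ε : ℝ} (hedge : ∀ t ∈ S, 1 - ε ≤ tpf P 1 t) :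
    ∀ l : List Γ, (∀ x ∈ l, x ∈ S) → 1 - l.length * ε ≤ tpf P 1 l.prod
  | [], _ => by simp [tpf_self]
  | t :: l, hl => by
    have ht := hedge t (hl t List.mem_cons_self)
    have ih := one_sub_length_mul_le_tpf_prod hedge l fun x hx =>
      hl x (List.mem_cons_of_mem t hx)
    have htriangle := tpf_add_tpf_le P 1 t (t * l.prod)
    have hshift : tpf P t (t * l.prod) = tpf P 1 l.prod := by
      simpa using tpf_mul_left P hinv t 1 l.prod
    rw [List.prod_cons, List.length_cons]
    push_cast
    linarith

theorem one_sub_wlen_mul_le_tpf (hgen : ∀ g : Γ, ∃ l : List Γ, (∀ x ∈ l, x ∈ S) ∧ l.prod = g)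
    {δ : ℝ} (hdeg : (1 - δ) * S.card < expDeg S P) (g : Γ) :
    1 - wlen S g * (δ * S.card) ≤ tpf P 1 g := by
  obtain ⟨l, hlS, rfl, hlen⟩ := exists_word_length_eq_wlen hgen g
  rw [← hlen]
  refine one_sub_length_mul_le_tpf_prod P hinv (fun t ht => ?_) l hlS
  exact (one_sub_mul_card_lt_measureReal_edge P hdeg ht).le.trans (measureReal_edge_le_tpf P 1 t)

end LowerBound

theorem percolation_implies_haagerup_general {Γ : Type*} [Group Γ] [Countable Γ]
    (S : Finset Γ) (hS : IsSymmGen S)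
    (hperc : ∀ α : ℝ, α < 1 → ∃ P : Measure (Config Γ),
      IsInvBondPerc S P ∧ expDeg S P > α * (S.card : ℝ) ∧ TpfVanishes S P) :
    ∃ φ : ℕ → Γ → ℝ,
      (∀ n : ℕ,
        (∀ g : Γ, 0 ≤ φ n g ∧ φ n g ≤ 1) ∧
        φ n 1 = 1 ∧
        IsPosDef (fun g => (φ n g : ℂ)) ∧
        (∀ c : ℝ, 0 < c → {g : Γ | c ≤ |φ n g|}.Finite)) ∧
      (∀ g : Γ, Tendsto (fun n => φ n g) atTop (nhds 1)) := by
  obtain ⟨-, -, hgen⟩ := hS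
  have hα : ∀ n : ℕ, 1 - 1 / ((n : ℝ) + 1) < 1 := fun n => sub_lt_self _ (by positivity)
  choose P hP hdeg hvan using fun n : ℕ => hperc _ (hα n)
  have := fun n => (hP n).prob
  refine ⟨fun n g => tpf (P n) 1 g, fun n => ⟨fun g => ⟨tpf_nonneg _ _ _, tpf_le_one _ _ _⟩,
    tpf_self _ _, isPosDef_tpf _ (hP n).invariant,
    fun c hc => finite_setOf_le_abs_tpf hgen (hvan n) hc⟩, fun g => ?_⟩
  have hlower : Tendsto (fun n : ℕ => 1 - wlen S g * (1 / ((n : ℝ) + 1) * S.card)) atTop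
      (nhds 1) := by
    simpa using ((tendsto_one_div_add_atTop_nhds_zero_nat.mul_const (S.card : ℝ)).const_mul
      (wlen S g : ℝ)).const_sub 1
  exact tendsto_of_tendsto_of_tendsto_of_le_of_le hlower tendsto_const_nhds
    (fun n => one_sub_wlen_mul_le_tpf (P n) (hP n).invariant hgen (hdeg n) g)
    (fun n => tpf_le_one _ _ _)

/-- If the Cayley graph of `Γ` admits, for every `α < 1`, a `Γ`-invariant bond
percolation with `E[deg_ω(o)] > α·deg(o)` and two-point function vanishing at infinity, then
there is a sequence of normalized positive definite functions on `Γ`, each vanishing at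
infinity, converging pointwise to `1` (Γ has the Haagerup property). -/
theorem percolation_implies_haagerup {Γ : Type*} [Group Γ] [Countable Γ] [Infinite Γ]
    (S : Finset Γ) (hS : IsSymmGen S)
    (hperc : ∀ α : ℝ, α < 1 → ∃ P : Measure (Config Γ),
      IsInvBondPerc S P ∧ expDeg S P > α * (S.card : ℝ) ∧ TpfVanishes S P) :
    ∃ φ : ℕ → Γ → ℝ,
      (∀ n : ℕ,
        (∀ g : Γ, 0 ≤ φ n g ∧ φ n g ≤ 1) ∧
        φ n 1 = 1 ∧
        IsPosDef (fun g => (φ n g : ℂ)) ∧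
        (∀ c : ℝ, 0 < c → {g : Γ | c ≤ |φ n g|}.Finite)) ∧
      (∀ g : Γ, Tendsto (fun n => φ n g) atTop (nhds 1)) :=
  percolation_implies_haagerup_general S hS hperc

end InvPerc
end

section
/- Let F_r be the free group on r ≥ 1 generators, and let |g| denote the word length of g with respect to the free generators and their inverses (the length of the reduced word representing g). Then for every p ∈ (0,1), the function g ↦ p^{|g|} is a normalized positive definite function on F_r; equivalently, for every λ > 0 the function g ↦ exp(−λ|g|) is positive definite, so the word length function on F_r is conditionally negative definite (Haagerup's theorem). -/
open MeasureTheory Filter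
open scoped ComplexOrder symmDiff

namespace InvPerc

/-- The word length on the free group `F_r` with respect to the free generators and their
inverses: the length of the reduced word. -/
def freeLen {r : ℕ} (g : FreeGroup (Fin r)) : ℕ := (FreeGroup.toWord g).length

end InvPerc

/-!
The nonempty prefixes of the reduced word of `g` are the edges of the geodesic from `1` to `g`
in the Cayley tree of the free group, so `|g⁻¹h|` is the size of the symmetric difference of the
prefix sets of `g` and `h` (adding the empty prefix to both changes nothing). It therefore
suffices to study `(A, B) ↦ #(A ∆ B)` on finite sets. Writing `#(A ∆ B) = ∑ₑ (1_A e - 1_B e)²`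
shows that it is conditionally negative definite, and `p ^ #(A ∆ B) = ∏ₑ c (1_A e) (1_B e)` with
the positive semidefinite matrix `c = [[1, p], [p, 1]]` shows, by the Schur product theorem, that
`p ^ #(A ∆ B)` is positive definite.
-/

open Finset Matrix

section
variable {ι κ 𝕜 : Type*} [Fintype ι] [RCLike 𝕜]

theorem Matrix.posSemidef_of_prod_hadamard {M : κ → Matrix ι ι 𝕜} (U : Finset κ)
    (hM : ∀ e ∈ U, (M e).PosSemidef) : (of fun i j => ∏ e ∈ U, M e i j).PosSemidef := by
  classical
  induction U using Finset.induction_on with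
  | empty => simpa [vecMulVec] using posSemidef_vecMulVec_self_star (fun _ : ι => (1 : 𝕜))
  | insert e U he ih =>
    have := (hM e (mem_insert_self e U)).hadamard
      (ih fun e' he' => hM e' (mem_insert_of_mem he'))
    simpa [prod_insert he, hadamard] using this

theorem Matrix.posSemidef_ite_eq [Fintype κ] [DecidableEq κ] {p : ℝ} (hp0 : 0 ≤ p)
    (hp1 : p ≤ 1) :
    (of fun a b : κ => if a = b then 1 else (p : 𝕜)).PosSemidef := by
  have hJ := posSemidef_vecMulVec_self_star (fun _ : κ => (1 : 𝕜))
  have := (PosSemidef.one.smul (sub_nonneg.mpr hp1)).add (hJ.smul hp0)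
  convert this using 1
  ext a b
  by_cases h : a = b <;> simp [h, vecMulVec, RCLike.real_smul_eq_coe_mul]

theorem Finset.pow_card_eq_prod_ite {β M : Type*} [DecidableEq β] [CommMonoid M] (x : M)
    {s U : Finset β} (hs : s ⊆ U) : x ^ #s = ∏ e ∈ U, if e ∈ s then x else 1 := by
  rw [prod_ite_mem, inter_eq_right.mpr hs, prod_const]

theorem Matrix.posSemidef_pow_card_symmDiff {β : Type*} [DecidableEq β] {p : ℝ} (hp0 : 0 ≤ p)
    (hp1 : p ≤ 1) (s : ι → Finset β) :
    (of fun i j => ((p ^ #(s i ∆ s j) : ℝ) : 𝕜)).PosSemidef := by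
  let U := univ.biUnion s
  have hsub : ∀ i j, s i ∆ s j ⊆ U := fun i j =>
    symmDiff_le_sup.trans <|
      union_subset (subset_biUnion_of_mem s (mem_univ i)) (subset_biUnion_of_mem s (mem_univ j))
  convert posSemidef_of_prod_hadamard U fun e _ =>
    (posSemidef_ite_eq (κ := Bool) (𝕜 := 𝕜) hp0 hp1).submatrix fun i => decide (e ∈ s i)
    using 1
  ext i j
  rw [of_apply, RCLike.ofReal_pow, pow_card_eq_prod_ite _ (hsub i j)]
  refine prod_congr rfl fun e _ => ?_
  by_cases hi : e ∈ s i <;> by_cases hj : e ∈ s j <;> simp [hi, hj, mem_symmDiff]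
end

section
variable {ι β : Type*} [Fintype ι]

theorem Finset.sum_mul_mul_sq_sub_of_sum_eq_zero {a : ι → ℝ} (ha : ∑ i, a i = 0)
    (x : ι → ℝ) :
    ∑ i, ∑ j, a i * a j * (x i - x j) ^ 2 = -2 * (∑ i, a i * x i) ^ 2 := by
  have hexp : ∀ i j, a i * a j * (x i - x j) ^ 2 =
      a i * x i ^ 2 * a j + a i * (a j * x j ^ 2) - 2 * (a i * x i) * (a j * x j) := by
    intro i j; ring
  simp only [hexp, sum_add_distrib, sum_sub_distrib, ← mul_sum, ← sum_mul, ha]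
  ring

theorem Finset.card_symmDiff_eq_sum_sq [DecidableEq β] {s t U : Finset β} (hs : s ⊆ U)
    (ht : t ⊆ U) :
    (#(s ∆ t) : ℝ) =
      ∑ e ∈ U, ((if e ∈ s then 1 else 0) - (if e ∈ t then 1 else 0) : ℝ) ^ 2 := by
  have hst : s ∆ t ⊆ U := symmDiff_le_sup.trans (union_subset hs ht)
  rw [← filter_mem_eq_inter.trans (inter_eq_right.mpr hst), ← sum_boole]
  refine sum_congr rfl fun e _ => ?_
  by_cases he : e ∈ s <;> by_cases he' : e ∈ t <;> simp [he, he', mem_symmDiff]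

theorem Finset.sum_mul_mul_card_symmDiff_nonpos [DecidableEq β] {a : ι → ℝ}
    (ha : ∑ i, a i = 0) (s : ι → Finset β) : ∑ i, ∑ j, a i * a j * (#(s i ∆ s j) : ℝ) ≤ 0 := by
  let U := univ.biUnion s
  have hsU : ∀ i, s i ⊆ U := fun i => subset_biUnion_of_mem s (mem_univ i)
  let χ (e : β) (i : ι) : ℝ := if e ∈ s i then 1 else 0
  calc ∑ i, ∑ j, a i * a j * (#(s i ∆ s j) : ℝ)
      = ∑ e ∈ U, ∑ i, ∑ j, a i * a j * (χ e i - χ e j) ^ 2 := by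
        simp only [card_symmDiff_eq_sum_sq (hsU _) (hsU _), mul_sum]
        exact (sum_congr rfl fun _ _ => sum_comm).trans sum_comm
    _ = ∑ e ∈ U, -2 * (∑ i, a i * χ e i) ^ 2 := by
        simp only [sum_mul_mul_sq_sub_of_sum_eq_zero ha]
    _ ≤ 0 := sum_nonpos fun e _ => by nlinarith [sq_nonneg (∑ i, a i * χ e i)]
end

theorem List.nodup_inits {β : Type*} : ∀ l : List β, l.inits.Nodup
  | [] => by simp
  | a :: l => by
    rw [inits_cons, nodup_cons]
    exact ⟨by simp, (nodup_inits l).map cons_injective⟩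

theorem List.card_toFinset_inits {β : Type*} [DecidableEq β] (l : List β) :
    #l.inits.toFinset = l.length + 1 := by
  rw [toFinset_card_of_nodup l.nodup_inits, length_inits]

theorem List.toFinset_inits_cons {β : Type*} [DecidableEq β] (a : β) (l : List β) :
    (a :: l).inits.toFinset = insert [] (l.inits.toFinset.image (a :: ·)) := by
  ext
  simp

theorem List.card_toFinset_inits_symmDiff_nil {β : Type*} [DecidableEq β] (l : List β) :
    #(([] : List β).inits.toFinset ∆ l.inits.toFinset) = l.length := by
  have hnil : ({[]} : Finset (List β)) ⊆ l.inits.toFinset := by simp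
  rw [show ([] : List β).inits.toFinset = {[]} from rfl, symmDiff_of_le hnil,
    card_sdiff_of_subset hnil, card_toFinset_inits, card_singleton, Nat.add_sub_cancel]

theorem Finset.insert_symmDiff_insert_of_notMem {β : Type*} [DecidableEq β] {x : β}
    {s t : Finset β} (hs : x ∉ s) (ht : x ∉ t) : insert x s ∆ insert x t = s ∆ t := by
  ext e
  by_cases he : e = x <;> simp_all [mem_symmDiff]

namespace FreeGroup
variable {α : Type*} [DecidableEq α]

theorem IsReduced.invRev {L : List (α × Bool)} (h : IsReduced L) : IsReduced (invRev L) :=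
  isReduced_iff_reduce_eq.mpr (by rw [reduce_invRev, h.reduce_eq])

theorem reduce_invRev_cons_append_cons (a : α × Bool) (L₁ L₂ : List (α × Bool)) :
    reduce (invRev (a :: L₁) ++ a :: L₂) = reduce (invRev L₁ ++ L₂) := by
  refine reduce.Step.eq ?_
  simpa [invRev_cons, invRev] using
    Red.Step.not (L₁ := invRev L₁) (L₂ := L₂) (x := a.1) (b := !a.2)

theorem isReduced_invRev_cons_append_cons {a b : α × Bool} {L₁ L₂ : List (α × Bool)}
    (h₁ : IsReduced (a :: L₁)) (h₂ : IsReduced (b :: L₂)) (hab : a ≠ b) :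
    IsReduced (invRev (a :: L₁) ++ b :: L₂) := by
  refine List.isChain_append.mpr ⟨h₁.invRev, h₂, ?_⟩
  simp only [invRev, List.getLast?_reverse, List.head?_map, List.head?_cons, Option.mem_def,
    Option.map_some, Option.some.injEq, forall_eq']
  obtain ⟨x, s⟩ := a
  obtain ⟨y, t⟩ := b
  rintro (rfl : x = y)
  cases s <;> cases t <;> simp_all

theorem length_reduce_invRev_append :
    ∀ {L₁ L₂ : List (α × Bool)}, IsReduced L₁ → IsReduced L₂ →
    (reduce (invRev L₁ ++ L₂)).length = #(L₁.inits.toFinset ∆ L₂.inits.toFinset)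
  | [], L₂, _, h₂ => by
    rw [invRev_empty, List.nil_append, h₂.reduce_eq, List.card_toFinset_inits_symmDiff_nil]
  | a :: L₁, [], h₁, _ => by
    rw [List.append_nil, reduce_invRev, h₁.reduce_eq, invRev_length, symmDiff_comm,
      List.card_toFinset_inits_symmDiff_nil]
  | a :: L₁, b :: L₂, h₁, h₂ => by
    have hnil (c : α × Bool) (L : List (α × Bool)) : [] ∉ L.inits.toFinset.image (c :: ·) := by
      simp
    rw [List.toFinset_inits_cons, List.toFinset_inits_cons,
      insert_symmDiff_insert_of_notMem (hnil _ _) (hnil _ _)]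
    by_cases hab : a = b
    · subst hab
      rw [reduce_invRev_cons_append_cons,
        length_reduce_invRev_append (L₁ := L₁) (L₂ := L₂) h₁.tail h₂.tail,
        ← image_symmDiff _ _ List.cons_injective, card_image_of_injective _ List.cons_injective]
    · have hdisj :
          Disjoint (L₁.inits.toFinset.image (a :: ·)) (L₂.inits.toFinset.image (b :: ·)) := by
        simp [disjoint_left, Ne.symm hab]
      rw [(isReduced_invRev_cons_append_cons h₁ h₂ hab).reduce_eq, List.length_append,
        invRev_length, hdisj.symmDiff_eq_sup, sup_eq_union, card_union_of_disjoint hdisj,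
        card_image_of_injective _ List.cons_injective,
        card_image_of_injective _ List.cons_injective,
        List.card_toFinset_inits, List.card_toFinset_inits, List.length_cons, List.length_cons]

theorem norm_inv_mul (x y : FreeGroup α) :
    norm (x⁻¹ * y) = #(x.toWord.inits.toFinset ∆ y.toWord.inits.toFinset) := by
  rw [norm, toWord_mul, toWord_inv, length_reduce_invRev_append isReduced_toWord isReduced_toWord]

end FreeGroup

namespace InvPerc

theorem isPosDef_of_posSemidef {Γ : Type*} [Group Γ] {φ : Γ → ℂ}
    (h : ∀ (n : ℕ) (g : Fin n → Γ), (of fun i j => φ ((g i)⁻¹ * g j)).PosSemidef) :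
    IsPosDef φ := by
  intro n g a
  simpa [dotProduct, mulVec, mul_sum, mul_comm, mul_left_comm, mul_assoc] using
    (h n g).dotProduct_mulVec_nonneg a

variable {α : Type*} [DecidableEq α]

theorem isPosDef_pow_norm {p : ℝ} (hp0 : 0 ≤ p) (hp1 : p ≤ 1) :
    IsPosDef fun g : FreeGroup α => ((p ^ g.norm : ℝ) : ℂ) :=
  isPosDef_of_posSemidef fun n g => by
    have := posSemidef_pow_card_symmDiff (𝕜 := ℂ) hp0 hp1 fun i => (g i).toWord.inits.toFinset
    simp only [← FreeGroup.norm_inv_mul] at this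
    exact this

theorem isCondNegDef_norm : IsCondNegDef fun g : FreeGroup α => (g.norm : ℝ) := by
  refine ⟨by simp, fun g => congrArg Nat.cast FreeGroup.norm_inv_eq, fun n g a ha => ?_⟩
  simpa only [FreeGroup.norm_inv_mul] using
    sum_mul_mul_card_symmDiff_nonpos ha fun i => (g i).toWord.inits.toFinset

/-- Haagerup: on the free group `F_r`, for every `p ∈ (0,1)` the function
`g ↦ p^{|g|}` is a normalized positive definite function; equivalently, for every `λ > 0`
the function `g ↦ exp(-λ|g|)` is positive definite, so the word length is conditionally
negative definite. -/
theorem haagerup_free_group (r : ℕ) :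
    (∀ p : ℝ, 0 < p → p < 1 →
      ((p : ℝ) ^ freeLen (1 : FreeGroup (Fin r)) = 1 ∧
        IsPosDef (fun g : FreeGroup (Fin r) => ((p ^ freeLen g : ℝ) : ℂ)))) ∧
    (∀ lam : ℝ, 0 < lam →
      IsPosDef (fun g : FreeGroup (Fin r) =>
        ((Real.exp (-lam * (freeLen g : ℝ)) : ℝ) : ℂ))) ∧
    IsCondNegDef (fun g : FreeGroup (Fin r) => (freeLen g : ℝ)) := by
  refine ⟨fun p hp0 hp1 => ⟨by simp [freeLen], isPosDef_pow_norm hp0.le hp1.le⟩,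
    fun lam hlam => ?_, isCondNegDef_norm⟩
  have hexp (g : FreeGroup (Fin r)) :
      Real.exp (-lam * freeLen g) = Real.exp (-lam) ^ freeLen g := by
    rw [mul_comm, Real.exp_nat_mul]
  simp only [hexp]
  exact isPosDef_pow_norm (Real.exp_pos _).le (Real.exp_le_one_iff.mpr (neg_nonpos.mpr hlam.le))

end InvPerc
end
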